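/- For two elements v, w ∈ ℤ², v ∼ w (Hurwitz equivalence) if and only if Δ(v) = Δ(w) and M(v)_{2d(v)} = M(w)_{2d(w)}. -/

import Mathlib

/-- Alternating sum `Δ(v) = Σ (-1)^i * v i` (0-indexed; `(-1)^(i-1) a_i` in 1-indexed terms). -/
def Delta {m : ℕ} (v : Fin m → ℤ) : ℤ :=
  ∑ i : Fin m, (-1 : ℤ) ^ (i : ℕ) * v i

/-- `d(v)`: the (nonnegative) gcd of all pairwise differences of the entries of `v`;
for nonempty `v` this equals `gcd {v i - v 0 : i}`. -/
def dgcd {m : ℕ} (v : Fin m → ℤ) : ℤ :=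
  Finset.univ.gcd (fun p : Fin m × Fin m => v p.1 - v p.2)

/-- `M(v)_N`: the multiset of residues of the entries of `v` modulo `N`
(for `N = 0` this is the multiset of the entries themselves). -/
def resM {m : ℕ} (v : Fin m → ℤ) (N : ℤ) : Multiset ℤ :=
  (Finset.univ.val : Multiset (Fin m)).map (fun i => v i % N)

/-- The Hurwitz move `v·σ_i` (0-indexed `i`). -/
def sigmaAct {m : ℕ} (i : Fin (m - 1)) (v : Fin m → ℤ) : Fin m → ℤ :=
  have h : (i : ℕ) < m - 1 := i.isLt
  fun j =>
    if (j : ℕ) = (i : ℕ) then v ⟨(i : ℕ) + 1, by omega⟩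
    else if (j : ℕ) = (i : ℕ) + 1 then
      2 * v ⟨(i : ℕ) + 1, by omega⟩ - v ⟨(i : ℕ), by omega⟩
    else v j

/-- The inverse Hurwitz move `v·σ_i⁻¹` (0-indexed `i`). -/
def sigmaInvAct {m : ℕ} (i : Fin (m - 1)) (v : Fin m → ℤ) : Fin m → ℤ :=
  have h : (i : ℕ) < m - 1 := i.isLt
  fun j =>
    if (j : ℕ) = (i : ℕ) then 2 * v ⟨(i : ℕ), by omega⟩ - v ⟨(i : ℕ) + 1, by omega⟩
    else if (j : ℕ) = (i : ℕ) + 1 then v ⟨(i : ℕ), by omega⟩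
    else v j

/-- The virtual move `v·τ_i`: swap the `i`-th and `(i+1)`-st entries (0-indexed `i`). -/
def tauAct {m : ℕ} (i : Fin (m - 1)) (v : Fin m → ℤ) : Fin m → ℤ :=
  have h : (i : ℕ) < m - 1 := i.isLt
  fun j =>
    if (j : ℕ) = (i : ℕ) then v ⟨(i : ℕ) + 1, by omega⟩
    else if (j : ℕ) = (i : ℕ) + 1 then v ⟨(i : ℕ), by omega⟩
    else v j

/-- Hurwitz equivalence: the equivalence relation on `ℤ^m` generated by `v ∼ v·σ_i`. -/
def HurwitzEquiv {m : ℕ} : (Fin m → ℤ) → (Fin m → ℤ) → Prop :=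
  Relation.EqvGen (fun v w => ∃ i : Fin (m - 1), w = sigmaAct i v)

/-- A letter of a braid word: an index `i` and a sign (`true` = `σ_i`, `false` = `σ_i⁻¹`). -/
abbrev BraidLetter (m : ℕ) := Fin (m - 1) × Bool

/-- Action of a single braid letter. -/
def braidLetterAct {m : ℕ} (l : BraidLetter m) (v : Fin m → ℤ) : Fin m → ℤ :=
  if l.2 then sigmaAct l.1 v else sigmaInvAct l.1 v

/-- Action `v·β` of a braid word (letters applied in order). -/
def braidWordAct {m : ℕ} (β : List (BraidLetter m)) (v : Fin m → ℤ) : Fin m → ℤ :=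
  β.foldl (fun w l => braidLetterAct l w) v

/-- The transposition `(i, i+1)` of `Fin m` associated to the index `i`. -/
def letterPerm {m : ℕ} (i : Fin (m - 1)) : Equiv.Perm (Fin m) :=
  have h : (i : ℕ) < m - 1 := i.isLt
  Equiv.swap ⟨(i : ℕ), by omega⟩ ⟨(i : ℕ) + 1, by omega⟩

/-- The underlying permutation `π_β` of a braid word: the product, composed in
the same order as the letters are applied, of the transpositions `(i, i+1)`. -/
def braidWordPerm {m : ℕ} (β : List (BraidLetter m)) : Equiv.Perm (Fin m) :=
  β.foldl (fun p l => letterPerm l.1 * p) 1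

/-- Pure-braid Hurwitz equivalence: related by a braid word with trivial
underlying permutation. -/
def PureEquiv {m : ℕ} (v w : Fin m → ℤ) : Prop :=
  ∃ β : List (BraidLetter m), braidWordAct β v = w ∧ braidWordPerm β = 1

/-- A letter of a virtual braid word: `(i, none)` = `τ_i`, `(i, some true)` = `σ_i`,
`(i, some false)` = `σ_i⁻¹`. -/
abbrev VBraidLetter (m : ℕ) := Fin (m - 1) × Option Bool

/-- Action of a single virtual braid letter. -/
def vletterAct {m : ℕ} (l : VBraidLetter m) (v : Fin m → ℤ) : Fin m → ℤ :=
  match l.2 with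
  | none => tauAct l.1 v
  | some true => sigmaAct l.1 v
  | some false => sigmaInvAct l.1 v

/-- Action `v·β` of a virtual braid word (letters applied in order). -/
def vwordAct {m : ℕ} (β : List (VBraidLetter m)) (v : Fin m → ℤ) : Fin m → ℤ :=
  β.foldl (fun w l => vletterAct l w) v

/-- The underlying permutation `π_β` of a virtual braid word. -/
def vwordPerm {m : ℕ} (β : List (VBraidLetter m)) : Equiv.Perm (Fin m) :=
  β.foldl (fun p l => letterPerm l.1 * p) 1

/-- Virtual braid equivalence: `w = v·β` for some virtual braid word `β`. -/
def VirtualEquiv {m : ℕ} (v w : Fin m → ℤ) : Prop :=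
  ∃ β : List (VBraidLetter m), vwordAct β v = w

/-- Virtual-pure-braid equivalence: related by a virtual braid word with trivial
underlying permutation. -/
def VPureEquiv {m : ℕ} (v w : Fin m → ℤ) : Prop :=
  ∃ β : List (VBraidLetter m), vwordAct β v = w ∧ vwordPerm β = 1

/-! The move `σ_i` keeps `Δ` and sends the pair `(a_i, a_{i+1})` to
`(a_{i+1}, a_i + 2 (a_{i+1} - a_i))`, so modulo any divisor of `2 (a_{i+1} - a_i)` it merely swaps
two entries. This shows that it preserves `d` and then, modulo `2d`, the multiset of residues.
Conversely, in length two the `σ`-orbit of `(a, b)` consists of the consecutive pairs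
`(a + n (b - a), a + (n + 1) (b - a))` of the progression through `a` and `b`: equal `Δ` fixes the
step, and a common residue modulo `2 |a - b|` puts `w 0` on the progression. -/

theorem dgcd_dvd_sub {m : ℕ} (v : Fin m → ℤ) (j k : Fin m) : dgcd v ∣ v j - v k :=
  Finset.gcd_dvd (f := fun p : Fin m × Fin m => v p.1 - v p.2) (Finset.mem_univ (j, k))

theorem dgcd_dvd_dgcd_of_modEq {m : ℕ} {v w : Fin m → ℤ} (e : Fin m → Fin m)
    (h : ∀ j, v j ≡ w (e j) [ZMOD dgcd w]) : dgcd w ∣ dgcd v := by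
  refine Finset.dvd_gcd fun ⟨j, k⟩ _ => ?_
  have hjk : v j ≡ v k [ZMOD dgcd w] :=
    ((h j).trans (Int.modEq_iff_dvd.mpr (dgcd_dvd_sub w _ _))).trans (h k).symm
  exact Int.modEq_iff_dvd.mp hjk.symm

section Invariants

variable {m : ℕ} (i : Fin (m - 1)) (v : Fin m → ℤ)

theorem Delta_sigmaAct : Delta (sigmaAct i v) = Delta v := by
  have hi := i.isLt
  set a : Fin m := ⟨i, by omega⟩
  set b : Fin m := ⟨i + 1, by omega⟩
  have hab : a ≠ b := fun h => by simpa [a, b] using congrArg Fin.val h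
  suffices ∑ j : Fin m, (-1 : ℤ) ^ (j : ℕ) * (sigmaAct i v j - v j) = 0 by
    simpa [Delta, mul_sub, Finset.sum_sub_distrib, sub_eq_zero] using this
  rw [Finset.sum_eq_add a b hab (fun j _ hj => ?_) (by simp) (by simp)]
  · simp only [a, b, sigmaAct, ↓reduceIte, Nat.add_eq_left, one_ne_zero, pow_succ]
    ring
  · have h1 : (j : ℕ) ≠ i := fun h => hj.1 (Fin.ext h)
    have h2 : (j : ℕ) ≠ i + 1 := fun h => hj.2 (Fin.ext h)
    simp [sigmaAct, h1, h2]

theorem sigmaAct_modEq_letterPerm {N : ℤ}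
    (hN : N ∣ 2 * (v ⟨i + 1, by omega⟩ - v ⟨i, by omega⟩)) (j : Fin m) :
    sigmaAct i v j ≡ v (letterPerm i j) [ZMOD N] := by
  have hi := i.isLt
  rcases eq_or_ne (j : ℕ) i with hj | hj
  · rw [show j = ⟨i, by omega⟩ from Fin.ext hj]
    simp [letterPerm, sigmaAct]
  rcases eq_or_ne (j : ℕ) (i + 1) with hj' | hj'
  · rw [show j = ⟨i + 1, by omega⟩ from Fin.ext hj']
    simp only [letterPerm, sigmaAct, Equiv.swap_apply_right, Int.modEq_iff_dvd,
      Nat.succ_ne_self, if_false, if_true]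
    refine (dvd_neg.mpr hN).trans (dvd_of_eq ?_)
    ring
  · have : letterPerm i j = j :=
      Equiv.swap_apply_of_ne_of_ne (fun h => hj (congrArg Fin.val h))
        (fun h => hj' (congrArg Fin.val h))
    simp [sigmaAct, hj, hj', this]

theorem sigmaAct_succ_sub_sigmaAct :
    sigmaAct i v ⟨i + 1, by omega⟩ - sigmaAct i v ⟨i, by omega⟩ =
      v ⟨i + 1, by omega⟩ - v ⟨i, by omega⟩ := by
  simp only [sigmaAct, Nat.add_eq_left, one_ne_zero, ↓reduceIte]
  ring

theorem dgcd_sigmaAct : dgcd (sigmaAct i v) = dgcd v := by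
  have hswap (j : Fin m) : letterPerm i (letterPerm i j) = j := Equiv.swap_apply_self _ _ _
  refine dvd_antisymm_of_normalize_eq Finset.normalize_gcd Finset.normalize_gcd ?_ ?_
  · have hN : dgcd (sigmaAct i v) ∣ 2 * (v ⟨i + 1, by omega⟩ - v ⟨i, by omega⟩) := by
      rw [← sigmaAct_succ_sub_sigmaAct]
      exact (dgcd_dvd_sub _ _ _).mul_left 2
    refine dgcd_dvd_dgcd_of_modEq (letterPerm i) fun j => ?_
    simpa [hswap] using (sigmaAct_modEq_letterPerm i v hN (letterPerm i j)).symm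
  · exact dgcd_dvd_dgcd_of_modEq (letterPerm i)
      (sigmaAct_modEq_letterPerm i v ((dgcd_dvd_sub v _ _).mul_left 2))

theorem resM_sigmaAct {N : ℤ} (hN : N ∣ 2 * (v ⟨i + 1, by omega⟩ - v ⟨i, by omega⟩)) :
    resM (sigmaAct i v) N = resM v N := by
  have hres : (fun j => sigmaAct i v j % N) = (fun j => v j % N) ∘ letterPerm i :=
    funext (sigmaAct_modEq_letterPerm i v hN)
  rw [resM, hres, ← Multiset.map_map, Multiset.map_univ_val_equiv, resM]

end Invariants

theorem HurwitzEquiv.Delta_eq_and_resM_eq {m : ℕ} {v w : Fin m → ℤ} (h : HurwitzEquiv v w) :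
    Delta v = Delta w ∧ resM v (2 * dgcd v) = resM w (2 * dgcd w) := by
  induction h with
  | rel x y hxy =>
    obtain ⟨i, rfl⟩ := hxy
    refine ⟨(Delta_sigmaAct i x).symm, ?_⟩
    rw [dgcd_sigmaAct, resM_sigmaAct]
    exact mul_dvd_mul_left 2 (dgcd_dvd_sub x _ _)
  | refl x => exact ⟨rfl, rfl⟩
  | symm x y _ ih => exact ⟨ih.1.symm, ih.2.symm⟩
  | trans x y z _ _ ih₁ ih₂ => exact ⟨ih₁.1.trans ih₂.1, ih₁.2.trans ih₂.2⟩

theorem dgcd_dvd_sub_of_resM_eq {m : ℕ} {v w : Fin m → ℤ}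
    (hM : resM v (2 * dgcd v) = resM w (2 * dgcd v)) (j k : Fin m) : dgcd v ∣ w j - v k := by
  have hwj : w j % (2 * dgcd v) ∈ resM w (2 * dgcd v) :=
    Multiset.mem_map_of_mem _ (Finset.mem_univ_val j)
  rw [← hM] at hwj
  obtain ⟨l, -, hl⟩ := Multiset.mem_map.mp hwj
  have hN : dgcd v ∣ w j - v l := (dvd_mul_left _ _).trans (Int.ModEq.dvd hl)
  simpa using dvd_add hN (dgcd_dvd_sub v l k)

theorem Delta_fin_two (v : Fin 2 → ℤ) : Delta v = v 0 - v 1 := by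
  simp [Delta, Fin.sum_univ_two, sub_eq_add_neg]

theorem dgcd_fin_two (v : Fin 2 → ℤ) : dgcd v = |Delta v| := by
  rw [Int.abs_eq_normalize]
  refine dvd_antisymm_of_normalize_eq Finset.normalize_gcd (normalize_idem _) ?_ ?_
  · rw [Delta_fin_two]
    exact (dgcd_dvd_sub v 0 1).trans (normalize_associated _).symm.dvd
  · refine (normalize_associated _).dvd.trans (Finset.dvd_gcd fun ⟨j, k⟩ _ => ?_)
    rw [Delta_fin_two]
    fin_cases j <;> fin_cases k <;> simp [dvd_sub_comm]

theorem sigmaAct_fin_two (i : Fin (2 - 1)) (v : Fin 2 → ℤ) :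
    sigmaAct i v = ![v 1, 2 * v 1 - v 0] := by
  obtain rfl : i = 0 := Fin.fin_one_eq_zero i
  funext j
  fin_cases j <;> rfl

def progressionPair (v : Fin 2 → ℤ) (n : ℤ) : Fin 2 → ℤ :=
  ![v 0 + n * (v 1 - v 0), v 0 + (n + 1) * (v 1 - v 0)]

theorem sigmaAct_progressionPair (v : Fin 2 → ℤ) (n : ℤ) :
    sigmaAct 0 (progressionPair v n) = progressionPair v (n + 1) := by
  rw [sigmaAct_fin_two, progressionPair, progressionPair]
  simp only [Matrix.cons_val_zero, Matrix.cons_val_one, Matrix.cons_val_fin_one]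
  congr 2
  ring

theorem hurwitzEquiv_progressionPair (v : Fin 2 → ℤ) (n : ℤ) :
    HurwitzEquiv v (progressionPair v n) := by
  induction n using Int.induction_on with
  | zero =>
    have h0 : progressionPair v 0 = v := by
      funext j
      fin_cases j <;> simp [progressionPair]
    rw [h0]
    exact .refl v
  | succ k ih =>
    exact ih.trans _ _ _ (.rel _ _ ⟨0, (sigmaAct_progressionPair v k).symm⟩)
  | pred k ih =>
    refine ih.trans _ _ _ (.symm _ _ (.rel _ _ ⟨0, ?_⟩))
    rw [sigmaAct_progressionPair, sub_add_cancel]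

theorem hurwitzEquiv_of_Delta_eq_of_dvd {v w : Fin 2 → ℤ} (hΔ : Delta v = Delta w)
    (h : v 1 - v 0 ∣ w 0 - v 0) : HurwitzEquiv v w := by
  obtain ⟨n, hn⟩ := h
  convert hurwitzEquiv_progressionPair v n
  rw [Delta_fin_two, Delta_fin_two] at hΔ
  funext j
  fin_cases j <;>
    simp only [progressionPair, Fin.zero_eta, Fin.mk_one, Matrix.cons_val_zero,
      Matrix.cons_val_one, Matrix.cons_val_fin_one] <;>
    linarith

/-- for `v, w ∈ ℤ²`, `v ∼ w` iff `Δ(v) = Δ(w)` and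
`M(v)_{2d(v)} = M(w)_{2d(w)}`. -/
theorem stmt_19 (v w : Fin 2 → ℤ) :
    HurwitzEquiv v w ↔
      Delta v = Delta w ∧ resM v (2 * dgcd v) = resM w (2 * dgcd w) := by
  refine ⟨HurwitzEquiv.Delta_eq_and_resM_eq, fun ⟨hΔ, hM⟩ => ?_⟩
  have hd : dgcd w = dgcd v := by rw [dgcd_fin_two, dgcd_fin_two, hΔ]
  rw [hd] at hM
  have hv : v 1 - v 0 ∣ dgcd v := by
    rw [dgcd_fin_two, Delta_fin_two, ← abs_neg, neg_sub]
    exact self_dvd_abs _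
  exact hurwitzEquiv_of_Delta_eq_of_dvd hΔ (hv.trans (dgcd_dvd_sub_of_resM_eq hM 0 0))
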